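/- Let ℓ ≥ 6 be an integer and let w be a subscript-increasing word on Σ₈. If φ(w) contains a 5/4-power of length 5ℓ (i.e., a factor x y x with |x| = ℓ and |y| = 3ℓ), then ℓ is divisible by 6. -/

import Mathlib

abbrev Sigma8 := ℤ × Fin 8

def phiAux (n : ℤ) : ℕ → List Sigma8
  | 0 => [(0,0),(1,1),(0,2),(0,3),(1,4),(n+3,5)]
  | 1 => [(1,6),(1,7),(0,0),(0,1),(0,2),(n+2,3)]
  | 2 => [(1,4),(1,5),(1,6),(0,7),(0,0),(n+3,1)]
  | 3 => [(0,2),(1,3),(1,4),(0,5),(1,6),(n+2,7)]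
  | 4 => [(0,0),(1,1),(0,2),(0,3),(1,4),(n+1,5)]
  | 5 => [(1,6),(1,7),(0,0),(0,1),(0,2),(n+2,3)]
  | 6 => [(1,4),(1,5),(1,6),(0,7),(0,0),(n+1,1)]
  | 7 => [(0,2),(1,3),(1,4),(0,5),(1,6),(n+2,7)]
  | _ => []

/-- The 6-uniform morphism φ on Σ₈, on a single letter. -/
def phi (a : Sigma8) : List Sigma8 := phiAux a.1 a.2.val

/-- φ extended to words by concatenation. -/
def phiW (w : List Sigma8) : List Sigma8 := w.flatMap phi

/-- A word on Σ₈ is subscript-increasing if subscripts increase by 1 mod 8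
from each letter to the next. -/
def SubIncr (w : List Sigma8) : Prop :=
  ∀ i : ℕ, (h : i + 1 < w.length) →
    (w.get ⟨i + 1, h⟩).2 = (w.get ⟨i, Nat.lt_of_succ_lt h⟩).2 + 1

/-- A 5/4-power: a word of the form x y x with x nonempty and |y| = 3|x|
(equivalently |xy| = 4|x|). -/
def IsPow54 {α : Type*} (w : List α) : Prop :=
  ∃ x y : List α, x ≠ [] ∧ y.length = 3 * x.length ∧ w = x ++ y ++ x

/-!
Off the positions `m ≡ 5 (mod 6)`, the letter at position `m` of `φ(w)` is determined by `m` and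
by the subscript `j` of the first letter of `w`: its subscript is `6j + m (mod 8)`, and the first
five letters of `φ(n_k)` do not depend on `n`. This "skeleton" is periodic of period `48`. The two
copies of `x` in `x y x` start `4ℓ` apart, and if `6 ∤ ℓ` then `4ℓ` is not divisible by `24`; an
exhaustive check shows that for such a shift every window of six consecutive positions contains a
determined position where the skeleton disagrees with its translate. As `ℓ ≥ 6`, the first six
letters of `x` form such a window, so the two copies of `x` cannot agree.
-/

open Fin.NatCast

lemma List.IsInfix.exists_getElem?_add_eq {α : Type*} {x y L : List α} (h : x ++ y ++ x <:+: L) :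
    ∃ p, p + (x.length + y.length) + x.length ≤ L.length ∧
      ∀ i < x.length, L[p + i]? = L[p + (x.length + y.length) + i]? := by
  obtain ⟨s, t, rfl⟩ := h
  refine ⟨s.length, by simp; omega, fun i hi => ?_⟩
  have hidx : s.length + (x.length + y.length) + i - s.length - x.length - y.length = i := by omega
  simp only [List.append_assoc, List.getElem?_append]
  rw [if_neg (by omega), if_pos (by omega), if_neg (by omega), if_neg (by omega), if_neg (by omega),
    if_pos (by omega), Nat.add_sub_cancel_left, hidx]

lemma phi_length (a : Sigma8) : (phi a).length = 6 := by
  obtain ⟨n, j⟩ := a; fin_cases j <;> rfl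

lemma phi_getElem?_of_ne_five (n : ℤ) (j : Fin 8) {r : ℕ} (hr : r ≠ 5) :
    (phi (n, j))[r]? = (phi (0, j))[r]? := by
  fin_cases j <;> rcases r with _ | _ | _ | _ | _ | _ | r <;> simp_all [phi, phiAux]

lemma phiW_getElem? (w : List Sigma8) (m : ℕ) :
    (phiW w)[m]? = w[m / 6]?.bind fun a => (phi a)[m % 6]? := by
  induction w generalizing m with
  | nil => simp [phiW]
  | cons a w ih =>
    have hcons : phiW (a :: w) = phi a ++ phiW w := List.flatMap_cons
    rw [hcons]
    rcases Nat.lt_or_ge m 6 with hm | hm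
    · rw [List.getElem?_append_left (by rw [phi_length]; exact hm)]
      simp [Nat.div_eq_of_lt hm, Nat.mod_eq_of_lt hm]
    · obtain ⟨k, rfl⟩ : ∃ k, m = k + 6 := ⟨m - 6, by omega⟩
      rw [List.getElem?_append_right (by rw [phi_length]; omega), phi_length,
        Nat.add_sub_cancel, ih, Nat.add_div_right k (by norm_num), Nat.add_mod_right]
      simp

lemma phiW_length (w : List Sigma8) : (phiW w).length = 6 * w.length := by
  simp [phiW, phi_length, mul_comm]

-- The last letter `(n + c)` of each block depends on `n`, so it is left undetermined.
def skeleton (j : Fin 8) (m : ℕ) : Option Sigma8 :=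
  if m % 6 = 5 then none else (phi (0, j + ((m / 6 : ℕ) : Fin 8)))[m % 6]?

lemma skeleton_six_mul_add (j : Fin 8) (q m : ℕ) :
    skeleton j (6 * q + m) = skeleton (j + q) m := by
  have hdiv : (6 * q + m) / 6 = q + m / 6 := by omega
  simp only [skeleton, Nat.mul_add_mod, hdiv, Nat.cast_add, add_assoc]

lemma skeleton_add_forty_eight_mul (j : Fin 8) (m r : ℕ) :
    skeleton j (m + 48 * r) = skeleton j m := by
  have hr : ((8 * r : ℕ) : Fin 8) = 0 := by simp
  rw [show m + 48 * r = 6 * (8 * r) + m by ring, skeleton_six_mul_add, hr, add_zero]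

set_option synthInstance.maxSize 1000 in
lemma skeleton_mismatch (j : Fin 8) : ∀ a < 6, ∀ d < 48, 4 ∣ d → ¬ 24 ∣ d →
    ∃ i < 6, skeleton j (a + i) ≠ none ∧ skeleton j (a + d + i) ≠ none ∧
      skeleton j (a + i) ≠ skeleton j (a + d + i) := by
  fin_cases j <;> decide

lemma SubIncr.snd_getElem {w : List Sigma8} (hw : SubIncr w) {k : ℕ} (hk : k < w.length) :
    w[k].2 = (w[0]'(by omega)).2 + k := by
  induction k with
  | zero => simp
  | succ k ih =>
    have hstep := hw k hk
    simp only [List.get_eq_getElem] at hstep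
    rw [hstep, ih (by omega)]
    push_cast
    rw [add_assoc]

lemma phiW_getElem?_eq_skeleton {w : List Sigma8} {j : Fin 8}
    (hj : ∀ k (hk : k < w.length), w[k].2 = j + k) {m : ℕ} (hm : m < (phiW w).length)
    (hs : skeleton j m ≠ none) : (phiW w)[m]? = skeleton j m := by
  have hk : m / 6 < w.length := by rw [phiW_length] at hm; omega
  have h5 : m % 6 ≠ 5 := fun h => hs (if_pos h)
  rw [phiW_getElem?, List.getElem?_eq_getElem hk, Option.bind_some, skeleton, if_neg h5, ← hj _ hk]
  exact phi_getElem?_of_ne_five _ _ h5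

theorem stmt3 (ℓ : ℕ) (hℓ : 6 ≤ ℓ) (w : List Sigma8) (hw : SubIncr w)
    (x y : List Sigma8) (hx : x.length = ℓ) (hy : y.length = 3 * ℓ)
    (hfac : (x ++ y ++ x) <:+: phiW w) : 6 ∣ ℓ := by
  obtain ⟨p, hbound, hrep⟩ := hfac.exists_getElem?_add_eq
  rw [hx, hy, show ℓ + 3 * ℓ = 4 * ℓ by ring] at hbound hrep
  have hw0 : 0 < w.length := by rw [phiW_length] at hbound; omega
  set j := (w[0]'hw0).2
  have hj : ∀ k (hk : k < w.length), w[k].2 = j + k := fun k hk => hw.snd_getElem hk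
  set j' := j + ((p / 6 : ℕ) : Fin 8)
  by_contra h6
  obtain ⟨i, hi, hs, hs', hne⟩ := skeleton_mismatch j' (p % 6) (Nat.mod_lt _ (by norm_num))
    (4 * ℓ % 48) (Nat.mod_lt _ (by norm_num)) (by omega) fun h => h6 (by omega)
  have hfirst : skeleton j (p + i) = skeleton j' (p % 6 + i) := by
    rw [← skeleton_six_mul_add]; congr 1; omega
  have hsecond : skeleton j (p + 4 * ℓ + i) = skeleton j' (p % 6 + 4 * ℓ % 48 + i) := by
    calc skeleton j (p + 4 * ℓ + i)
        = skeleton j (6 * (p / 6) + (p % 6 + 4 * ℓ % 48 + i) + 48 * (4 * ℓ / 48)) := by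
          congr 1; omega
      _ = skeleton j' (p % 6 + 4 * ℓ % 48 + i) := by
          rw [skeleton_add_forty_eight_mul, skeleton_six_mul_add]
  rw [← hfirst] at hs hne
  rw [← hsecond] at hs' hne
  rw [← phiW_getElem?_eq_skeleton hj (by omega) hs, ← phiW_getElem?_eq_skeleton hj (by omega) hs',
    hrep i (by omega)] at hne
  exact hne rfl
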